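/- Let σ > 0, t > 0, μ ∈ ℝ, K' > 0, and x ∈ ℝ. Then ∫_ℝ (−μ) ∂_y[(2πσ²t)^{−1/2} exp(−(x−y)²/(2σ²t))] · max(e^y − K', 0) dy = μ e^{x + σ²t/2} 𝒩((x − log K' + σ²t)/(σ√t)). -/

import Mathlib

open MeasureTheory

/-- The standard normal cumulative distribution function. -/
noncomputable def stdNormalCdf (x : ℝ) : ℝ :=
  ∫ u in Set.Iio x, (Real.sqrt (2 * Real.pi))⁻¹ * Real.exp (-u ^ 2 / 2)

/-- The Gaussian kernel `p_σ(t,x,y) := (2πσ²t)^{−1/2} exp(−(x−y)²/(2σ²t))`. -/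
noncomputable def gaussKer (σ t x y : ℝ) : ℝ :=
  (Real.sqrt (2 * Real.pi * σ ^ 2 * t))⁻¹ * Real.exp (-(x - y) ^ 2 / (2 * σ ^ 2 * t))

/-! Integrating by parts on `(log K', ∞)`, where the payoff `e^y - K'` vanishes at the left end
and the Gaussian factor kills it at `+∞`, turns the integral into `μ ∫_{log K'}^∞ p(x,y) e^y dy`.
Completing the square, `p(x,y) e^y = e^{x + σ²t/2} p(x + σ²t, y)`, and since `p(m,·)` is the
density of `m - σ√t Z` with `Z` standard normal, `∫_a^∞ p(m,y) dy = 𝒩((m - a)/(σ√t))`. -/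

open Set Filter Real ProbabilityTheory Topology

lemma stdNormalCdf_eq_gaussianReal_Iio (z : ℝ) :
    stdNormalCdf z = (gaussianReal 0 1 (Iio z)).toReal := by
  rw [gaussianReal_apply_eq_integral _ one_ne_zero, ENNReal.toReal_ofReal
    (setIntegral_nonneg_of_ae (ae_of_all _ fun _ => gaussianPDFReal_nonneg _ _ _)), stdNormalCdf]
  simp [gaussianPDFReal]

lemma gaussianReal_map_const_sub_mul (m s : ℝ) :
    (gaussianReal 0 1).map (fun u => m - s * u) = gaussianReal m (s ^ 2).toNNReal := by
  have hcomp : (fun u => m - s * u) = (m - ·) ∘ (s * ·) := rfl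
  rw [hcomp, ← Measure.map_map (by fun_prop) (by fun_prop), gaussianReal_map_const_mul,
    gaussianReal_map_const_sub]
  congr 1
  · simp
  · ext; simp [sq_nonneg]

lemma integral_mul_max_exp_sub_zero (f : ℝ → ℝ) {K : ℝ} (hK : 0 < K) :
    ∫ y, f y * max (exp y - K) 0 = ∫ y in Ioi (log K), f y * (exp y - K) := by
  rw [← integral_indicator measurableSet_Ioi]
  congr 1
  ext y
  by_cases hy : y ∈ Ioi (log K)
  · have := (log_lt_iff_lt_exp hK).mp hy
    rw [indicator_of_mem hy, max_eq_left (by linarith)]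
  · have := (log_lt_iff_lt_exp hK).not.mp hy
    rw [indicator_of_notMem hy, max_eq_right (by linarith), mul_zero]

section GaussKer

variable {σ t : ℝ}

lemma gaussKer_eq_gaussianPDFReal (hv : 0 ≤ σ ^ 2 * t) (m y : ℝ) :
    gaussKer σ t m y = gaussianPDFReal m (σ ^ 2 * t).toNNReal y := by
  rw [gaussKer, gaussianPDFReal, Real.coe_toNNReal _ hv, sub_sq_comm]
  ring_nf

lemma integrable_gaussKer (hv : 0 ≤ σ ^ 2 * t) (m : ℝ) : Integrable (gaussKer σ t m) := by
  rw [funext (gaussKer_eq_gaussianPDFReal hv m)]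
  exact integrable_gaussianPDFReal m _

lemma gaussKer_eq_mul_exp_neg_mul_sq (m y : ℝ) :
    gaussKer σ t m y
      = (√(2 * π * σ ^ 2 * t))⁻¹ * exp (-(2 * σ ^ 2 * t)⁻¹ * (y - m) ^ 2) := by
  rw [gaussKer, sub_sq_comm, neg_div, div_eq_inv_mul, neg_mul]

lemma integrable_sub_mul_gaussKer (hv : 0 < σ ^ 2 * t) (m x : ℝ) :
    Integrable (fun y => (x - y) * gaussKer σ t m y) := by
  have hb : 0 < (2 * σ ^ 2 * t)⁻¹ := inv_pos.mpr (by linarith)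
  have hlin := ((integrable_mul_exp_neg_mul_sq hb).comp_sub_right m).const_mul
    (√(2 * π * σ ^ 2 * t))⁻¹
  refine (((integrable_gaussKer hv.le m).const_mul (x - m)).sub hlin).congr
    (ae_of_all _ fun y => ?_)
  simp only [Pi.sub_apply, gaussKer_eq_mul_exp_neg_mul_sq m y]
  ring

lemma tendsto_gaussKer_atTop (hv : 0 < σ ^ 2 * t) (m : ℝ) :
    Tendsto (gaussKer σ t m) atTop (𝓝 0) := by
  have hb : -(2 * σ ^ 2 * t)⁻¹ < 0 := neg_neg_of_pos (inv_pos.mpr (by linarith))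
  have hsq : Tendsto (fun y : ℝ => (y - m) ^ 2) atTop atTop :=
    (tendsto_pow_atTop two_ne_zero).comp (tendsto_atTop_add_const_right _ (-m) tendsto_id)
  have h := (tendsto_exp_atBot.comp (hsq.const_mul_atTop_of_neg hb)).const_mul
    (√(2 * π * σ ^ 2 * t))⁻¹
  rw [mul_zero] at h
  exact h.congr fun y => (gaussKer_eq_mul_exp_neg_mul_sq m y).symm

lemma hasDerivAt_gaussKer (x y : ℝ) :
    HasDerivAt (gaussKer σ t x) (gaussKer σ t x y * ((x - y) / (σ ^ 2 * t))) y := by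
  have h := ((((hasDerivAt_id y).const_sub x).pow 2).neg.div_const (2 * σ ^ 2 * t)).exp.const_mul
    (√(2 * π * σ ^ 2 * t))⁻¹
  refine h.congr_deriv ?_
  simp only [gaussKer, Pi.neg_apply, Pi.pow_apply, id]
  ring

lemma gaussKer_mul_exp (hv : σ ^ 2 * t ≠ 0) (x y : ℝ) :
    gaussKer σ t x y * exp y = exp (x + σ ^ 2 * t / 2) * gaussKer σ t (x + σ ^ 2 * t) y := by
  rw [gaussKer, gaussKer, mul_assoc, ← exp_add, mul_left_comm, ← exp_add]
  obtain ⟨hσ2, ht⟩ := mul_ne_zero_iff.mp hv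
  have hσ : σ ≠ 0 := (pow_ne_zero_iff two_ne_zero).mp hσ2
  congr 2
  field_simp
  ring

lemma setIntegral_gaussKer (hv : 0 < σ ^ 2 * t) (m : ℝ) {s : Set ℝ} :
    ∫ y in s, gaussKer σ t m y = (gaussianReal m (σ ^ 2 * t).toNNReal s).toReal := by
  rw [gaussianReal_apply_eq_integral _ (by simpa using hv), ENNReal.toReal_ofReal
    (setIntegral_nonneg_of_ae (ae_of_all _ fun _ => gaussianPDFReal_nonneg _ _ _))]
  simp only [gaussKer_eq_gaussianPDFReal hv.le]

lemma setIntegral_Ioi_gaussKer (hσ : 0 < σ) (ht : 0 < t) (m a : ℝ) :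
    ∫ y in Ioi a, gaussKer σ t m y = stdNormalCdf ((m - a) / (σ * √t)) := by
  have hs : 0 < σ * √t := by positivity
  have hpre : (fun u => m - σ * √t * u) ⁻¹' Ioi a = Iio ((m - a) / (σ * √t)) := by
    ext u
    simp only [mem_preimage, mem_Ioi, mem_Iio, lt_div_iff₀ hs]
    constructor <;> intro <;> linarith
  rw [setIntegral_gaussKer (by positivity), stdNormalCdf_eq_gaussianReal_Iio, ← hpre,
    ← Measure.map_apply (by fun_prop) measurableSet_Ioi, gaussianReal_map_const_sub_mul,
    mul_pow, sq_sqrt ht.le]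

lemma setIntegral_Ioi_gaussKer_mul_exp (hσ : 0 < σ) (ht : 0 < t) (x a : ℝ) :
    ∫ y in Ioi a, gaussKer σ t x y * exp y
      = exp (x + σ ^ 2 * t / 2) * stdNormalCdf ((x - a + σ ^ 2 * t) / (σ * √t)) := by
  have hv : σ ^ 2 * t ≠ 0 := by positivity
  simp_rw [gaussKer_mul_exp hv x]
  rw [integral_const_mul, setIntegral_Ioi_gaussKer hσ ht, add_sub_right_comm]

lemma setIntegral_Ioi_deriv_gaussKer_mul_exp_sub (hv : 0 < σ ^ 2 * t) (x : ℝ) {K : ℝ}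
    (hK : 0 < K) :
    ∫ y in Ioi (log K), deriv (gaussKer σ t x) y * (exp y - K)
      = -∫ y in Ioi (log K), gaussKer σ t x y * exp y := by
  set C := exp (x + σ ^ 2 * t / 2)
  have hexp : ∀ y, gaussKer σ t x y * exp y = C * gaussKer σ t (x + σ ^ 2 * t) y :=
    gaussKer_mul_exp hv.ne' x
  have hderiv : ∀ y, HasDerivAt (gaussKer σ t x) (deriv (gaussKer σ t x) y) y :=
    fun y => (hasDerivAt_gaussKer x y).differentiableAt.hasDerivAt
  have hint_exp : Integrable (fun y => gaussKer σ t x y * exp y) := by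
    simpa only [hexp] using (integrable_gaussKer hv.le _).const_mul C
  have hint_deriv : Integrable (fun y => deriv (gaussKer σ t x) y * (exp y - K)) := by
    have hsplit : ∀ y, C / (σ ^ 2 * t) * ((x - y) * gaussKer σ t (x + σ ^ 2 * t) y)
        - K / (σ ^ 2 * t) * ((x - y) * gaussKer σ t x y)
        = deriv (gaussKer σ t x) y * (exp y - K) := fun y => by
      rw [(hasDerivAt_gaussKer x y).deriv]
      linear_combination -((x - y) / (σ ^ 2 * t)) * hexp y
    exact (((integrable_sub_mul_gaussKer hv _ x).const_mul _).sub
      ((integrable_sub_mul_gaussKer hv x x).const_mul _)).congr (ae_of_all _ hsplit)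
  have hlim : Tendsto (fun y => gaussKer σ t x y * (exp y - K)) atTop (𝓝 0) := by
    have h := ((tendsto_gaussKer_atTop hv (x + σ ^ 2 * t)).const_mul C).sub
      ((tendsto_gaussKer_atTop hv x).const_mul K)
    rw [mul_zero, mul_zero, sub_zero] at h
    exact h.congr fun y => by rw [mul_sub, hexp, mul_comm K]
  have hibp := integral_Ioi_of_hasDerivAt_of_tendsto' (a := log K)
    (fun y _ => (hderiv y).mul ((hasDerivAt_exp y).sub_const K))
    (hint_deriv.add hint_exp).integrableOn hlim
  rw [Pi.mul_apply, exp_log hK, sub_self, mul_zero, sub_zero,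
    integral_add hint_deriv.integrableOn hint_exp.integrableOn] at hibp
  exact eq_neg_of_add_eq_zero_left hibp

end GaussKer

/-- For `σ, t > 0`, `μ ∈ ℝ`, `K' > 0` and `x ∈ ℝ`,
`∫ (−μ) ∂_y[p_σ(t,x,y)] max(e^y − K', 0) dy = μ e^{x+σ²t/2} 𝒩((x − log K' + σ²t)/(σ√t))`. -/
theorem stmt_16 (σ t μ K' x : ℝ) (hσ : 0 < σ) (ht : 0 < t) (hK' : 0 < K') :
    (∫ y : ℝ, (-μ) * deriv (fun y' => gaussKer σ t x y') y * max (Real.exp y - K') 0)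
      = μ * Real.exp (x + σ ^ 2 * t / 2)
          * stdNormalCdf ((x - Real.log K' + σ ^ 2 * t) / (σ * Real.sqrt t)) := by
  simp_rw [mul_assoc (-μ)]
  rw [integral_const_mul, integral_mul_max_exp_sub_zero _ hK',
    setIntegral_Ioi_deriv_gaussKer_mul_exp_sub (by positivity) x hK',
    setIntegral_Ioi_gaussKer_mul_exp hσ ht]
  ring
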